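/- For every μ ∈ (0, (15 − 3√5)/10], set δ = μ/(3−μ), ν̲ = δ(√δ + 1), ν̄ = √δ(√δ + 1). Then the three-point distribution P* assigning probability μ/(3ν̲) to ν̲, probability μ/(3ν̄) to ν̄, and probability μ/3 to 1 is a Borel probability measure on [0,1] with mean μ (so P* ∈ P_μ), and every feasible mechanism (x,p) satisfies ∫ p dP* ≤ (μ/3)(√δ + 1)². Consequently z*(μ) ≤ (μ/3)(√δ + 1)². -/

import Mathlib

/-!
Under `P*` every type `ν` in the support carries mass `μ/(3ν)`, so each contributes the same
weight `μ/3` to revenue per unit of allocation. Bounding the payments by individual rationality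
at `ν̲` and by the incentive constraints for the downward deviations `ν̄ ↦ ν̲` and `1 ↦ ν̄`, the
allocations telescope and the revenue is at most `(μ/3)(1 + ν̲/ν̄ + ν̄) = (μ/3)(√δ + 1)²`. The
restriction on `μ` is exactly what keeps `ν̄ = δ + √δ` inside `[0,1]`.
-/

open MeasureTheory Set

noncomputable section

/-- A Borel probability measure on ℝ supported on `[0,1]`. -/
def IsDistOn01 (P : Measure ℝ) : Prop :=
  IsProbabilityMeasure P ∧ P (Set.Icc (0:ℝ) 1)ᶜ = 0

/-- Membership in the first-moment ambiguity set `P_μ`. -/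
def MemAmb (μ : ℝ) (P : Measure ℝ) : Prop :=
  IsDistOn01 P ∧ ∫ ν, ν ∂P = μ

/-- A feasible single-agent mechanism. -/
structure Feasible (x p : ℝ → ℝ) : Prop where
  meas_x : Measurable x
  meas_p : Measurable p
  x_mem : ∀ ν ∈ Set.Icc (0:ℝ) 1, x ν ∈ Set.Icc (0:ℝ) 1
  ic : ∀ ν ∈ Set.Icc (0:ℝ) 1, ∀ νh ∈ Set.Icc (0:ℝ) 1, p ν ≤ ν * (x ν - x νh) + νh
  ir : ∀ ν ∈ Set.Icc (0:ℝ) 1, p ν ≤ ν * x ν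

/-- Worst-case expected payment of a payment rule `p` over the ambiguity set `P_μ`. -/
def worstCase (μ : ℝ) (p : ℝ → ℝ) : ℝ :=
  sInf {v : ℝ | ∃ P : Measure ℝ, MemAmb μ P ∧ v = ∫ ν, p ν ∂P}

/-- The seller's optimal worst-case revenue `z*(μ)`. -/
def zStar (μ : ℝ) : ℝ :=
  sSup {z : ℝ | ∃ x p : ℝ → ℝ, Feasible x p ∧ z = worstCase μ p}

/-- `δ = μ/(3-μ)`. -/
def del (μ : ℝ) : ℝ := μ/(3-μ)

/-- The low type `ν̲ = δ(√δ + 1)`. -/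
def nuL (μ : ℝ) : ℝ := del μ * (Real.sqrt (del μ) + 1)

/-- The middle type `ν̄ = √δ(√δ + 1)`. -/
def nuH (μ : ℝ) : ℝ := Real.sqrt (del μ) * (Real.sqrt (del μ) + 1)

/-- The three-point worst-case distribution. -/
def P3 (μ : ℝ) : Measure ℝ :=
  ENNReal.ofReal (μ/(3*nuL μ)) • Measure.dirac (nuL μ)
    + ENNReal.ofReal (μ/(3*nuH μ)) • Measure.dirac (nuH μ)
    + ENNReal.ofReal (μ/3) • Measure.dirac 1

section ThreePoint

variable {α : Type*} [MeasurableSpace α] {w₁ w₂ w₃ : ℝ} {a b c : α}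

lemma integrable_ofReal_smul_dirac [MeasurableSingletonClass α] (f : α → ℝ) (w : ℝ) (a : α) :
    Integrable f (ENNReal.ofReal w • Measure.dirac a) :=
  (integrable_dirac enorm_lt_top).smul_measure ENNReal.ofReal_ne_top

lemma integral_ofReal_smul_dirac [MeasurableSingletonClass α] (f : α → ℝ) {w : ℝ} (hw : 0 ≤ w)
    (a : α) :
    ∫ x, f x ∂(ENNReal.ofReal w • Measure.dirac a) = w * f a := by
  rw [integral_smul_measure, integral_dirac, ENNReal.toReal_ofReal hw, smul_eq_mul]

lemma integral_three_point [MeasurableSingletonClass α] (h₁ : 0 ≤ w₁) (h₂ : 0 ≤ w₂) (h₃ : 0 ≤ w₃)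
    (f : α → ℝ) :
    ∫ x, f x ∂(ENNReal.ofReal w₁ • Measure.dirac a + ENNReal.ofReal w₂ • Measure.dirac b
      + ENNReal.ofReal w₃ • Measure.dirac c) = w₁ * f a + w₂ * f b + w₃ * f c := by
  have hint := integrable_ofReal_smul_dirac f
  rw [integral_add_measure ((hint _ _).add_measure (hint _ _)) (hint _ _),
    integral_add_measure (hint _ _) (hint _ _), integral_ofReal_smul_dirac f h₁,
    integral_ofReal_smul_dirac f h₂, integral_ofReal_smul_dirac f h₃]

lemma isProbabilityMeasure_three_point (h₁ : 0 ≤ w₁) (h₂ : 0 ≤ w₂) (h₃ : 0 ≤ w₃)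
    (hsum : w₁ + w₂ + w₃ = 1) :
    IsProbabilityMeasure (ENNReal.ofReal w₁ • Measure.dirac a
      + ENNReal.ofReal w₂ • Measure.dirac b + ENNReal.ofReal w₃ • Measure.dirac c) := by
  constructor
  simp only [Measure.add_apply, Measure.smul_apply, measure_univ, smul_eq_mul, mul_one]
  rw [← ENNReal.ofReal_add h₁ h₂, ← ENNReal.ofReal_add (add_nonneg h₁ h₂) h₃, hsum,
    ENNReal.ofReal_one]

lemma three_point_compl_eq_zero [MeasurableSingletonClass α] {s : Set α} (ha : a ∈ s) (hb : b ∈ s)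
    (hc : c ∈ s) :
    (ENNReal.ofReal w₁ • Measure.dirac a + ENNReal.ofReal w₂ • Measure.dirac b
      + ENNReal.ofReal w₃ • Measure.dirac c) sᶜ = 0 := by
  simp [ha, hb, hc]

end ThreePoint

lemma worstCase_le {μ B : ℝ} {p : ℝ → ℝ} {P : Measure ℝ} (hB : 0 ≤ B) (hP : MemAmb μ P)
    (hpB : ∫ ν, p ν ∂P ≤ B) : worstCase μ p ≤ B := by
  by_cases hbdd : BddBelow {v : ℝ | ∃ P : Measure ℝ, MemAmb μ P ∧ v = ∫ ν, p ν ∂P}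
  · exact (csInf_le hbdd ⟨P, hP, rfl⟩).trans hpB
  · rw [worstCase, Real.sInf_of_not_bddBelow hbdd]
    exact hB

lemma zStar_le {μ B : ℝ} {P : Measure ℝ} (hB : 0 ≤ B) (hP : MemAmb μ P)
    (hrev : ∀ x p : ℝ → ℝ, Feasible x p → ∫ ν, p ν ∂P ≤ B) : zStar μ ≤ B := by
  refine Real.sSup_le ?_ hB
  rintro z ⟨x, p, hf, rfl⟩
  exact worstCase_le hB hP (hrev x p hf)

/-- Individual rationality at `a` and the deviations `b ↦ a`, `1 ↦ b`: the allocation terms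
telescope, leaving only `x 1 ≤ 1`. -/
lemma Feasible.revenue_three_point_le {x p : ℝ → ℝ} (hf : Feasible x p) {a b c : ℝ}
    (ha : a ∈ Ioc 0 1) (hb : b ∈ Ioc 0 1) (hc : 0 ≤ c) :
    c / a * p a + c / b * p b + c * p 1 ≤ c * (1 + a / b + b) := by
  have h1 : (1 : ℝ) ∈ Icc 0 1 := right_mem_Icc.2 zero_le_one
  have hpa := hf.ir a (Ioc_subset_Icc_self ha)
  have hpb := hf.ic b (Ioc_subset_Icc_self hb) a (Ioc_subset_Icc_self ha)
  have hp1 := hf.ic 1 h1 b (Ioc_subset_Icc_self hb)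
  have hx1 := (hf.x_mem 1 h1).2
  have ha0 := ha.1
  have hb0 := hb.1
  calc c / a * p a + c / b * p b + c * p 1
      ≤ c / a * (a * x a) + c / b * (b * (x b - x a) + a) + c * (1 * (x 1 - x b) + b) := by
        gcongr
    _ = c * (x 1 + a / b + b) := by field_simp; ring
    _ ≤ c * (1 + a / b + b) := by gcongr

section WorstCaseDistribution

variable {μ : ℝ}

lemma del_pos (h0 : 0 < μ) (h3 : μ < 3) : 0 < del μ :=
  div_pos h0 (sub_pos.2 h3)

lemma mul_one_add_del (h3 : μ ≠ 3) : μ * (1 + del μ) = 3 * del μ := by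
  have : 3 - μ ≠ 0 := sub_ne_zero.2 (Ne.symm h3)
  rw [del]
  field_simp
  ring

lemma lt_three_of_mem_Ioc (hμ : μ ∈ Ioc 0 ((15 - 3 * √5) / 10)) : μ < 3 := by
  nlinarith [hμ.2, Real.sqrt_nonneg 5]

/-- The bound `(15 - 3√5)/10` on `μ` is `δ ≤ ((√5 - 1)/2)²`, and `(√5 - 1)/2` is the positive
root of `t² + t = 1`. -/
lemma del_add_sqrt_del_le_one (hμ : μ ∈ Ioc 0 ((15 - 3 * √5) / 10)) :
    del μ + √(del μ) ≤ 1 := by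
  have h3 : 0 < 3 - μ := sub_pos.2 (lt_three_of_mem_Ioc hμ)
  have hδ := del_pos hμ.1 (lt_three_of_mem_Ioc hμ)
  obtain ⟨-, hμle⟩ := hμ
  have h5 : √5 ^ 2 = 5 := Real.sq_sqrt (by norm_num)
  have h52 : 2 ≤ √5 := by nlinarith [Real.sqrt_nonneg 5]
  have hdel : del μ ≤ (3 - √5) / 2 := by
    rw [del, div_le_iff₀ h3]
    nlinarith [mul_le_mul_of_nonneg_right hμle (show (0:ℝ) ≤ 5 - √5 by nlinarith)]
  set s := √(del μ)
  have hs : s ^ 2 = del μ := Real.sq_sqrt hδ.le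
  nlinarith [sq_nonneg (2 * s - √5 + 1), Real.sqrt_nonneg (del μ)]

lemma nuH_eq (h : 0 ≤ del μ) : nuH μ = del μ + √(del μ) := by
  rw [nuH, mul_add_one, Real.mul_self_sqrt h]

lemma nuL_eq_sqrt_del_mul_nuH (h : 0 ≤ del μ) : nuL μ = √(del μ) * nuH μ := by
  rw [nuL, nuH, ← mul_assoc, Real.mul_self_sqrt h]

lemma P3_weights_sum (h0 : 0 < μ) (h3 : μ < 3) :
    μ / (3 * nuL μ) + μ / (3 * nuH μ) + μ / 3 = 1 := by
  have hδ := del_pos h0 h3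
  have hkey := mul_one_add_del h3.ne
  rw [nuL_eq_sqrt_del_mul_nuH hδ.le, nuH]
  set s := √(del μ)
  have hs : 0 < s := Real.sqrt_pos.2 hδ
  rw [← Real.sq_sqrt hδ.le] at hkey
  field_simp
  linear_combination (1 + s) * hkey

lemma nuH_mem_Ioc (hμ : μ ∈ Ioc 0 ((15 - 3 * √5) / 10)) : nuH μ ∈ Ioc 0 1 := by
  have hδ := del_pos hμ.1 (lt_three_of_mem_Ioc hμ)
  rw [nuH_eq hδ.le]
  exact ⟨by positivity, del_add_sqrt_del_le_one hμ⟩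

lemma nuL_mem_Ioc (hμ : μ ∈ Ioc 0 ((15 - 3 * √5) / 10)) : nuL μ ∈ Ioc 0 1 := by
  have hδ := del_pos hμ.1 (lt_three_of_mem_Ioc hμ)
  have hH := nuH_mem_Ioc hμ
  have hs1 : √(del μ) ≤ 1 := by linarith [del_add_sqrt_del_le_one hμ]
  rw [nuL_eq_sqrt_del_mul_nuH hδ.le]
  exact ⟨mul_pos (Real.sqrt_pos.2 hδ) hH.1, mul_le_one₀ hs1 hH.1.le hH.2⟩

lemma P3_weights_nonneg (hμ : μ ∈ Ioc 0 ((15 - 3 * √5) / 10)) :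
    0 ≤ μ / (3 * nuL μ) ∧ 0 ≤ μ / (3 * nuH μ) ∧ 0 ≤ μ / 3 := by
  have := hμ.1
  have := (nuL_mem_Ioc hμ).1
  have := (nuH_mem_Ioc hμ).1
  exact ⟨by positivity, by positivity, by positivity⟩

lemma integral_P3 (hμ : μ ∈ Ioc 0 ((15 - 3 * √5) / 10)) (f : ℝ → ℝ) :
    ∫ ν, f ν ∂(P3 μ) =
      μ / (3 * nuL μ) * f (nuL μ) + μ / (3 * nuH μ) * f (nuH μ) + μ / 3 * f 1 :=
  let ⟨h₁, h₂, h₃⟩ := P3_weights_nonneg hμ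
  integral_three_point h₁ h₂ h₃ f

lemma memAmb_P3 (hμ : μ ∈ Ioc 0 ((15 - 3 * √5) / 10)) : MemAmb μ (P3 μ) := by
  have hL := nuL_mem_Ioc hμ
  have hH := nuH_mem_Ioc hμ
  obtain ⟨h₁, h₂, h₃⟩ := P3_weights_nonneg hμ
  refine ⟨⟨isProbabilityMeasure_three_point h₁ h₂ h₃
    (P3_weights_sum hμ.1 (lt_three_of_mem_Ioc hμ)),
    three_point_compl_eq_zero (Ioc_subset_Icc_self hL) (Ioc_subset_Icc_self hH)
      (right_mem_Icc.2 zero_le_one)⟩, ?_⟩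
  rw [integral_P3 hμ]
  field_simp [hL.1.ne', hH.1.ne']
  ring

lemma integral_P3_le (hμ : μ ∈ Ioc 0 ((15 - 3 * √5) / 10)) {x p : ℝ → ℝ} (hf : Feasible x p) :
    ∫ ν, p ν ∂(P3 μ) ≤ (μ / 3) * (√(del μ) + 1) ^ 2 := by
  have hδ := del_pos hμ.1 (lt_three_of_mem_Ioc hμ)
  have hH := nuH_mem_Ioc hμ
  calc ∫ ν, p ν ∂(P3 μ)
      = μ / 3 / nuL μ * p (nuL μ) + μ / 3 / nuH μ * p (nuH μ) + μ / 3 * p 1 := by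
        rw [integral_P3 hμ, div_div, div_div]
    _ ≤ μ / 3 * (1 + nuL μ / nuH μ + nuH μ) :=
        hf.revenue_three_point_le (nuL_mem_Ioc hμ) hH (by linarith [hμ.1])
    _ = μ / 3 * (√(del μ) + 1) ^ 2 := by
        rw [nuL_eq_sqrt_del_mul_nuH hδ.le, mul_div_cancel_right₀ _ hH.1.ne', nuH_eq hδ.le]
        linear_combination (-μ / 3) * Real.sq_sqrt hδ.le

end WorstCaseDistribution

/-- For `μ ∈ (0, (15 − 3√5)/10]`, the three-point distribution `P*` belongs
to `P_μ`, every feasible mechanism earns at most `(μ/3)(√δ + 1)²` in expectation under `P*`,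
and consequently `z*(μ) ≤ (μ/3)(√δ + 1)²`. -/
theorem three_point_upper_bound
    (μ : ℝ) (hμ : μ ∈ Set.Ioc (0:ℝ) ((15 - 3*Real.sqrt 5)/10)) :
    MemAmb μ (P3 μ) ∧
    (∀ x p : ℝ → ℝ, Feasible x p →
      ∫ ν, p ν ∂(P3 μ) ≤ (μ/3)*(Real.sqrt (del μ) + 1)^2) ∧
    zStar μ ≤ (μ/3)*(Real.sqrt (del μ) + 1)^2 := by
  have hrev : ∀ x p : ℝ → ℝ, Feasible x p →
      ∫ ν, p ν ∂(P3 μ) ≤ (μ/3)*(Real.sqrt (del μ) + 1)^2 :=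
    fun _ _ => integral_P3_le hμ
  exact ⟨memAmb_P3 hμ, hrev, zStar_le (by have := hμ.1; positivity) (memAmb_P3 hμ) hrev⟩

end
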